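/- Let G be a finite group whose power graph is a cograph, and let K be a connected component of the prime graph π(G). Then K is a star graph whose center is the smallest prime in K: every edge of π(G) within K contains the smallest prime of K as an endpoint. -/

import Mathlib

/-- The power graph of a group: `g` and `h` are adjacent iff they are distinct and
one is a power (integer power) of the other. -/
def powerGraph (G : Type*) [Group G] : SimpleGraph G where
  Adj g h := g ≠ h ∧ (h ∈ Subgroup.zpowers g ∨ g ∈ Subgroup.zpowers h)
  symm := ⟨fun g h ⟨hne, hor⟩ => ⟨hne.symm, hor.symm⟩⟩
  loopless := ⟨fun g h => h.1 rfl⟩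

/-- `a, b, c, d` induce a path on four vertices in `Γ`. -/
def InducedP4 {V : Type*} (Γ : SimpleGraph V) (a b c d : V) : Prop :=
  a ≠ c ∧ a ≠ d ∧ b ≠ d ∧ Γ.Adj a b ∧ Γ.Adj b c ∧ Γ.Adj c d ∧
    ¬Γ.Adj a c ∧ ¬Γ.Adj a d ∧ ¬Γ.Adj b d

/-- A graph is a cograph iff it has no induced `P4`. -/
def IsCograph {V : Type*} (Γ : SimpleGraph V) : Prop :=
  ∀ a b c d : V, ¬ InducedP4 Γ a b c d

/-- The prime graph (Gruenberg–Kegel graph) of a group, as a graph on `ℕ`. -/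
def primeGraph (G : Type*) [Group G] : SimpleGraph ℕ where
  Adj p q := p ≠ q ∧ p.Prime ∧ q.Prime ∧ ∃ g : G, orderOf g = p * q
  symm := ⟨fun p q ⟨hne, hp, hq, g, hg⟩ => ⟨hne.symm, hq, hp, g, by rwa [Nat.mul_comm]⟩⟩
  loopless := ⟨fun p h => h.1 rfl⟩

/-!
Let `p < q` and `r` be distinct primes, `x` of order `pq` and `y` of order `qr`; put `u = x ^ q`
and `z = x ^ p`, of orders `p` and `q`. If `u` commutes with elements `b`, `c` of order `q` with
`⟨b⟩ ≠ ⟨c⟩`, then `b — ub — u — uc` is an induced `P₄` of the power graph. In a cograph, therefore,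
`⟨z⟩` is the only subgroup of order `q` centralized by `u`, and `⟨u⟩` the only subgroup of order `p`
centralized by `z`. An element `c` of order `q` centralizing `z` thus normalizes `⟨u⟩`; the orbit of
`u` under `⟨c⟩` has size `1` or `q > p`, so `c` centralizes `u` and lies in `⟨z⟩`. Applied to a
central element of order `q` of a Sylow `q`-subgroup `Q ∋ z`, this makes `⟨z⟩` the only subgroup of
order `q` of `Q`, so `y ^ r` is conjugate into `⟨z⟩`. After conjugating `y`, `x — z — y — y ^ q` is
an induced `P₄`. Hence in `π(G)` a neighbour of the least prime `m` of a component has no neighbour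
besides `m`.
-/

open Subgroup Pointwise

theorem Nat.Prime.not_dvd_mul_of_ne {p a b : ℕ} (hp : p.Prime) (ha : a.Prime) (hb : b.Prime)
    (hpa : p ≠ a) (hpb : p ≠ b) : ¬p ∣ a * b := by
  rw [hp.dvd_mul, Nat.prime_dvd_prime_iff_eq hp ha, Nat.prime_dvd_prime_iff_eq hp hb]
  tauto

section Group

variable {G : Type*} [Group G]

theorem orderOf_pow_of_orderOf_eq_mul {x : G} {m n : ℕ} (hx : orderOf x = m * n) (hm : m ≠ 0) :
    orderOf (x ^ m) = n := by
  rw [orderOf_pow_of_dvd hm (hx ▸ dvd_mul_right m n), hx, Nat.mul_div_cancel_left n hm.bot_lt]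

theorem zpowers_eq_zpowers_of_mem_of_orderOf_eq [Finite G] {a b : G} (h : a ∈ zpowers b)
    (hab : orderOf a = orderOf b) : zpowers a = zpowers b :=
  eq_of_le_of_card_ge (zpowers_le.mpr h) (by rw [Nat.card_zpowers, Nat.card_zpowers, hab])

theorem mem_zpowers_pow_of_pow_eq_one [Finite G] {g a : G} {m n : ℕ} (hg : orderOf g = m * n)
    (ha : a ∈ zpowers g) (han : a ^ n = 1) : a ∈ zpowers (g ^ m) := by
  obtain ⟨i, rfl⟩ := mem_zpowers_iff.mp ha
  have hdvd : ((m * n : ℕ) : ℤ) ∣ i * n := by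
    rw [← hg, orderOf_dvd_iff_zpow_eq_one, zpow_mul, zpow_natCast, han]
  have hn : (n : ℤ) ≠ 0 := by
    exact_mod_cast right_ne_zero_of_mul (hg ▸ (orderOf_pos g).ne')
  push_cast at hdvd
  obtain ⟨j, rfl⟩ := (mul_dvd_mul_iff_right hn).mp hdvd
  exact mem_zpowers_iff.mpr ⟨j, by rw [← zpow_natCast, ← zpow_mul]⟩

theorem Commute.mem_zpowers_mul_right {u c : G} (h : Commute u c)
    (hcop : (orderOf u).Coprime (orderOf c)) : c ∈ zpowers (u * c) := by
  have hpow : (u * c) ^ orderOf u = c ^ orderOf u := by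
    rw [h.mul_pow, pow_orderOf_eq_one, one_mul]
  exact zpowers_le.mpr (hpow ▸ pow_mem (mem_zpowers _) _) (mem_zpowers_pow_iff.mpr hcop)

theorem Commute.mem_zpowers_mul_left {u c : G} (h : Commute u c)
    (hcop : (orderOf u).Coprime (orderOf c)) : u ∈ zpowers (u * c) :=
  h.eq ▸ h.symm.mem_zpowers_mul_right hcop.symm

theorem Commute.mem_zpowers_of_mem_zpowers_mul [Finite G] {u c a : G} (h : Commute u c)
    (hcop : (orderOf u).Coprime (orderOf c)) (ha : a ∈ zpowers (u * c))
    (hac : a ^ orderOf c = 1) : a ∈ zpowers c := by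
  have := mem_zpowers_pow_of_pow_eq_one (h.orderOf_mul_eq_mul_orderOf_of_coprime hcop) ha hac
  rw [h.mul_pow, pow_orderOf_eq_one, one_mul] at this
  exact zpowers_le.mpr (pow_mem (mem_zpowers c) _) this

theorem Commute.notMem_zpowers_mul [Finite G] {u b c : G} (h : Commute u c)
    (hcop : (orderOf u).Coprime (orderOf c)) (hbc : orderOf b = orderOf c)
    (hne : zpowers b ≠ zpowers c) : b ∉ zpowers (u * c) := fun hb =>
  hne (zpowers_eq_zpowers_of_mem_of_orderOf_eq
    (h.mem_zpowers_of_mem_zpowers_mul hcop hb (hbc ▸ pow_orderOf_eq_one b)) hbc)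

theorem commute_of_forall_conj_zpow_mem_zpowers [Finite G] {u c : G} {q : ℕ} (hq : q.Prime)
    (hc : orderOf c = q) (hu : orderOf u < q)
    (h : ∀ n : ℤ, MulAut.conj (c ^ n) u ∈ zpowers u) : Commute u c := by
  let H := zpowers (ConjAct.toConjAct c)
  have horbit : MulAction.orbit H u ⊆ zpowers u := by
    rintro _ ⟨⟨_, n, rfl⟩, rfl⟩
    have := h n
    rwa [MulAut.conj_apply] at this
  have hlt : (MulAction.orbit H u).ncard < q :=
    calc (MulAction.orbit H u).ncard ≤ (zpowers u : Set G).ncard :=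
          Set.ncard_le_ncard horbit (Set.toFinite _)
      _ = orderOf u := by rw [← Nat.card_coe_set_eq, SetLike.coe_sort_coe, Nat.card_zpowers]
      _ < q := hu
  have hdvd : (MulAction.orbit H u).ncard ∣ q := by
    rw [← MulAction.index_stabilizer, ← hc, ← (ConjAct.toConjAct : G ≃* ConjAct G).orderOf_eq,
      ← Nat.card_zpowers]
    exact index_dvd_card _
  have hstab : MulAction.stabilizer H u = ⊤ := by
    rw [← index_eq_one, MulAction.index_stabilizer]
    exact ((Nat.dvd_prime hq).mp hdvd).resolve_right hlt.ne
  have hmem : (⟨_, mem_zpowers _⟩ : H) ∈ MulAction.stabilizer H u := hstab ▸ mem_top _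
  have hfix : c * u * c⁻¹ = u := by
    rw [← ConjAct.toConjAct_smul]; exact MulAction.mem_stabilizer_iff.mp hmem
  exact (mul_inv_eq_iff_eq_mul.mp hfix).symm

theorem IsPGroup.exists_orderOf_eq_forall_commute [Finite G] {q : ℕ} [Fact q.Prime]
    {P : Subgroup G} (hP : IsPGroup q P) (hbot : P ≠ ⊥) :
    ∃ ζ ∈ P, orderOf ζ = q ∧ ∀ g ∈ P, Commute ζ g := by
  have : Nontrivial P := (nontrivial_iff_ne_bot P).mpr hbot
  have := hP.center_nontrivial
  have hdvd : q ∣ Nat.card (center P) :=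
    ((hP.to_subgroup (center P)).card_eq_or_dvd).resolve_left Finite.one_lt_card.ne'
  obtain ⟨ζ, hζ⟩ := exists_prime_orderOf_dvd_card' q hdvd
  refine ⟨(ζ : P), (ζ : P).2, by rw [Subgroup.orderOf_coe, Subgroup.orderOf_coe, hζ], fun g hg => ?_⟩
  exact (congrArg Subtype.val (mem_center_iff.mp ζ.2 ⟨g, hg⟩)).symm

theorem powerGraph_adj_of_mem_zpowers {a b : G} (h : b ∈ zpowers a) (hne : a ≠ b) :
    (powerGraph G).Adj a b :=
  ⟨hne, Or.inl h⟩

theorem notMem_zpowers_of_not_dvd {a b : G} (h : ¬orderOf a ∣ orderOf b) : a ∉ zpowers b :=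
  mt orderOf_dvd_of_mem_zpowers h

theorem inducedP4_powerGraph {a b c d : G} (hab : (powerGraph G).Adj a b)
    (hbc : (powerGraph G).Adj b c) (hcd : (powerGraph G).Adj c d)
    (hac : a ∉ zpowers c ∧ c ∉ zpowers a) (had : a ∉ zpowers d ∧ d ∉ zpowers a)
    (hbd : b ∉ zpowers d ∧ d ∉ zpowers b) : InducedP4 (powerGraph G) a b c d := by
  have ne {x y : G} (h : x ∉ zpowers y) : x ≠ y := by rintro rfl; exact h (mem_zpowers x)
  have nadj {x y : G} (h : x ∉ zpowers y ∧ y ∉ zpowers x) : ¬(powerGraph G).Adj x y := by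
    rintro ⟨-, hxy | hyx⟩
    exacts [h.2 hxy, h.1 hyx]
  exact ⟨ne hac.1, ne had.1, ne hbd.1, hab, hbc, hcd, nadj hac, nadj had, nadj hbd⟩

theorem inducedP4_mul_of_commute [Finite G] {p q : ℕ} (hp : p.Prime) (hq : q.Prime)
    (hpq : p ≠ q) {u b c : G} (hu : orderOf u = p) (hb : orderOf b = q) (hc : orderOf c = q)
    (hub : Commute u b) (huc : Commute u c) (hbc : zpowers b ≠ zpowers c) :
    InducedP4 (powerGraph G) b (u * b) u (u * c) := by
  have hcop : p.Coprime q := (Nat.coprime_primes hp hq).mpr hpq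
  have hcop_b : (orderOf u).Coprime (orderOf b) := by rwa [hu, hb]
  have hcop_c : (orderOf u).Coprime (orderOf c) := by rwa [hu, hc]
  have hub' : orderOf (u * b) = p * q := by
    rw [hub.orderOf_mul_eq_mul_orderOf_of_coprime hcop_b, hu, hb]
  have huc' : orderOf (u * c) = p * q := by
    rw [huc.orderOf_mul_eq_mul_orderOf_of_coprime hcop_c, hu, hc]
  have hb_uc : b ∉ zpowers (u * c) := huc.notMem_zpowers_mul hcop_c (hb.trans hc.symm) hbc
  have hc_ub : c ∉ zpowers (u * b) := hub.notMem_zpowers_mul hcop_b (hc.trans hb.symm) hbc.symm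
  have hne {a b : G} (h : orderOf a ≠ orderOf b) : a ≠ b := ne_of_apply_ne orderOf h
  refine inducedP4_powerGraph
    (powerGraph_adj_of_mem_zpowers (hub.mem_zpowers_mul_right hcop_b) (hne ?_)).symm
    (powerGraph_adj_of_mem_zpowers (hub.mem_zpowers_mul_left hcop_b) (hne ?_))
    (powerGraph_adj_of_mem_zpowers (huc.mem_zpowers_mul_left hcop_c) (hne ?_)).symm
    ⟨notMem_zpowers_of_not_dvd ?_, notMem_zpowers_of_not_dvd ?_⟩
    ⟨hb_uc, notMem_zpowers_of_not_dvd ?_⟩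
    ⟨fun h => hb_uc (zpowers_le.mpr h (hub.mem_zpowers_mul_right hcop_b)),
      fun h => hc_ub (zpowers_le.mpr h (huc.mem_zpowers_mul_right hcop_c))⟩
  all_goals simp only [hu, hb, hub', huc']
  · exact (Nat.mul_eq_right hq.ne_zero).not.mpr hp.ne_one
  · exact (Nat.mul_eq_left hp.ne_zero).not.mpr hq.ne_one
  · exact (Nat.mul_eq_left hp.ne_zero).not.mpr hq.ne_one
  · exact mt (Nat.prime_dvd_prime_iff_eq hq hp).mp hpq.symm
  · exact mt (Nat.prime_dvd_prime_iff_eq hp hq).mp hpq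
  · exact fun h => hpq ((Nat.prime_dvd_prime_iff_eq hp hq).mp ((dvd_mul_right p q).trans h))

theorem inducedP4_of_pow_mem_zpowers {p q r : ℕ} (hp : p.Prime) (hq : q.Prime) (hr : r.Prime)
    (hpq : p ≠ q) (hqr : q ≠ r) (hpr : p ≠ r) {x y : G} (hx : orderOf x = p * q)
    (hy : orderOf y = q * r) (hxy : x ^ p ∈ zpowers y) :
    InducedP4 (powerGraph G) x (x ^ p) y (y ^ q) := by
  have hxp : orderOf (x ^ p) = q := orderOf_pow_of_orderOf_eq_mul hx hp.ne_zero
  have hyq : orderOf (y ^ q) = r := orderOf_pow_of_orderOf_eq_mul hy hq.ne_zero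
  have hp_qr := hp.not_dvd_mul_of_ne hq hr hpq hpr
  have hr_pq := hr.not_dvd_mul_of_ne hp hq hpr.symm hqr.symm
  have hne {a b : G} (h : orderOf a ≠ orderOf b) : a ≠ b := ne_of_apply_ne orderOf h
  refine inducedP4_powerGraph
    (powerGraph_adj_of_mem_zpowers (pow_mem (mem_zpowers x) p) (hne ?_))
    (powerGraph_adj_of_mem_zpowers hxy (hne ?_)).symm
    (powerGraph_adj_of_mem_zpowers (pow_mem (mem_zpowers y) q) (hne ?_))
    ⟨notMem_zpowers_of_not_dvd ?_, notMem_zpowers_of_not_dvd ?_⟩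
    ⟨notMem_zpowers_of_not_dvd ?_, notMem_zpowers_of_not_dvd ?_⟩
    ⟨notMem_zpowers_of_not_dvd ?_, notMem_zpowers_of_not_dvd ?_⟩
  all_goals simp only [hx, hxp, hy, hyq]
  · exact (Nat.mul_eq_right hq.ne_zero).not.mpr hp.ne_one
  · exact (Nat.mul_eq_left hq.ne_zero).not.mpr hr.ne_one
  · exact (Nat.mul_eq_right hr.ne_zero).not.mpr hq.ne_one
  · exact fun h => hp_qr ((dvd_mul_right p q).trans h)
  · exact fun h => hr_pq ((dvd_mul_left r q).trans h)
  · exact fun h => hpr ((Nat.prime_dvd_prime_iff_eq hp hr).mp ((dvd_mul_right p q).trans h))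
  · exact hr_pq
  · exact mt (Nat.prime_dvd_prime_iff_eq hq hr).mp hqr
  · exact mt (Nat.prime_dvd_prime_iff_eq hr hq).mp hqr.symm

end Group

namespace IsCograph

variable {G : Type*} [Group G] [Finite G]

theorem zpowers_eq_of_commute (hco : IsCograph (powerGraph G)) {p q : ℕ} (hp : p.Prime)
    (hq : q.Prime) (hpq : p ≠ q) {u b c : G} (hu : orderOf u = p) (hb : orderOf b = q)
    (hc : orderOf c = q) (hub : Commute u b) (huc : Commute u c) : zpowers b = zpowers c := by
  by_contra hbc
  exact hco _ _ _ _ (inducedP4_mul_of_commute hp hq hpq hu hb hc hub huc hbc)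

theorem mem_zpowers_of_commute (hco : IsCograph (powerGraph G)) {p q : ℕ} (hp : p.Prime)
    (hq : q.Prime) (hlt : p < q) {x c : G} (hx : orderOf x = p * q) (hc : orderOf c = q)
    (hcx : Commute c (x ^ p)) : c ∈ zpowers (x ^ p) := by
  have hu : orderOf (x ^ q) = p :=
    orderOf_pow_of_orderOf_eq_mul (hx.trans (mul_comm p q)) hq.ne_zero
  have hz : orderOf (x ^ p) = q := orderOf_pow_of_orderOf_eq_mul hx hp.ne_zero
  have hconj (n : ℤ) : MulAut.conj (c ^ n) (x ^ q) ∈ zpowers (x ^ q) := by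
    have hfix : MulAut.conj (c ^ n) (x ^ p) = x ^ p := by
      rw [MulAut.conj_apply, (hcx.zpow_left n).eq, mul_inv_cancel_right]
    have hcomm := (Commute.pow_pow_self x p q).map (MulAut.conj (c ^ n))
    rw [hfix] at hcomm
    rw [← hco.zpowers_eq_of_commute hq hp hlt.ne' hz (by rw [MulEquiv.orderOf_eq, hu]) hu hcomm
      (Commute.pow_pow_self x p q)]
    exact mem_zpowers _
  have hcu : Commute (x ^ q) c := commute_of_forall_conj_zpow_mem_zpowers hq hc (hu ▸ hlt) hconj
  rw [← hco.zpowers_eq_of_commute hp hq hlt.ne hu hc hz hcu (Commute.pow_pow_self x q p)]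
  exact mem_zpowers c

theorem mem_zpowers_of_mem_sylow (hco : IsCograph (powerGraph G)) {p q : ℕ} (hp : p.Prime)
    (hq : q.Prime) (hlt : p < q) {x c : G} (hx : orderOf x = p * q) (Q : Sylow q G)
    (hxQ : x ^ p ∈ Q) (hc : orderOf c = q) (hcQ : c ∈ Q) : c ∈ zpowers (x ^ p) := by
  have : Fact q.Prime := ⟨hq⟩
  have hz : orderOf (x ^ p) = q := orderOf_pow_of_orderOf_eq_mul hx hp.ne_zero
  have hbot : (Q : Subgroup G) ≠ ⊥ := fun h =>
    hq.ne_one (by rw [← hz, orderOf_eq_one_iff, ← mem_bot, ← h]; exact hxQ)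
  obtain ⟨ζ, -, hζ, hζcomm⟩ := Q.isPGroup'.exists_orderOf_eq_forall_commute hbot
  have hζz : ζ ∈ zpowers (x ^ p) := hco.mem_zpowers_of_commute hp hq hlt hx hζ (hζcomm _ hxQ)
  have hzζ : x ^ p ∈ zpowers ζ :=
    zpowers_eq_zpowers_of_mem_of_orderOf_eq hζz (hζ.trans hz.symm) ▸ mem_zpowers _
  obtain ⟨k, hk⟩ := mem_zpowers_iff.mp hzζ
  exact hco.mem_zpowers_of_commute hp hq hlt hx hc (hk ▸ (hζcomm c hcQ).symm.zpow_right k)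

theorem exists_conj_mem_zpowers (hco : IsCograph (powerGraph G)) {p q : ℕ} (hp : p.Prime)
    (hq : q.Prime) (hlt : p < q) {x c : G} (hx : orderOf x = p * q) (hc : orderOf c = q) :
    ∃ g : G, MulAut.conj g c ∈ zpowers (x ^ p) := by
  have : Fact q.Prime := ⟨hq⟩
  have hz : orderOf (x ^ p) = q := orderOf_pow_of_orderOf_eq_mul hx hp.ne_zero
  obtain ⟨Q, hQ⟩ := (IsPGroup.of_card (n := 1) (by rw [Nat.card_zpowers, hz, pow_one]) :
    IsPGroup q (zpowers (x ^ p))).exists_le_sylow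
  obtain ⟨R, hR⟩ := (IsPGroup.of_card (n := 1) (by rw [Nat.card_zpowers, hc, pow_one]) :
    IsPGroup q (zpowers c)).exists_le_sylow
  obtain ⟨g, rfl⟩ := MulAction.exists_smul_eq G R Q
  refine ⟨g, hco.mem_zpowers_of_mem_sylow hp hq hlt hx _ (hQ (mem_zpowers _))
    (by rw [MulEquiv.orderOf_eq, hc]) ?_⟩
  change _ ∈ ((g • R : Sylow q G) : Subgroup G)
  rw [Sylow.coe_subgroup_smul]
  exact smul_mem_pointwise_smul _ _ _ (hR (mem_zpowers c))

theorem orderOf_ne_mul (hco : IsCograph (powerGraph G)) {p q r : ℕ} (hp : p.Prime)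
    (hq : q.Prime) (hr : r.Prime) (hlt : p < q) (hqr : q ≠ r) (hpr : p ≠ r) {x : G}
    (hx : orderOf x = p * q) (y : G) : orderOf y ≠ q * r := by
  intro hy
  obtain ⟨g, hg⟩ := hco.exists_conj_mem_zpowers hp hq hlt hx
    (orderOf_pow_of_orderOf_eq_mul (hy.trans (mul_comm q r)) hr.ne_zero)
  have hy' : orderOf (MulAut.conj g y) = q * r := by rw [MulEquiv.orderOf_eq, hy]
  have hmem : x ^ p ∈ zpowers (MulAut.conj g y) := by
    rw [map_pow] at hg
    have := zpowers_eq_zpowers_of_mem_of_orderOf_eq hg (by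
      rw [orderOf_pow_of_orderOf_eq_mul (hy'.trans (mul_comm q r)) hr.ne_zero,
        orderOf_pow_of_orderOf_eq_mul hx hp.ne_zero])
    exact zpowers_le.mpr (pow_mem (mem_zpowers _) r) (this ▸ mem_zpowers _)
  exact hco _ _ _ _ (inducedP4_of_pow_mem_zpowers hp hq hr hlt.ne hqr hpr hx hy' hmem)

theorem eq_of_primeGraph_adj (hco : IsCograph (powerGraph G)) {p q r : ℕ}
    (hpq : (primeGraph G).Adj p q) (hqr : (primeGraph G).Adj q r) (hlt : p < q) : r = p := by
  obtain ⟨-, hp, hq, x, hx⟩ := hpq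
  obtain ⟨hqr, -, hr, y, hy⟩ := hqr
  by_contra hrp
  exact hco.orderOf_ne_mul hp hq hr hlt hqr (Ne.symm hrp) hx y hy

end IsCograph

theorem SimpleGraph.Reachable.eq_or_adj_of_forall {V : Type*} {Γ : SimpleGraph V} {m c : V}
    (h : ∀ s v, Γ.Adj m s → Γ.Adj s v → v = m) (hc : Γ.Reachable m c) : c = m ∨ Γ.Adj m c := by
  rw [SimpleGraph.reachable_iff_reflTransGen] at hc
  induction hc with
  | refl => exact Or.inl rfl
  | tail _ hbc ih =>
    rcases ih with rfl | hmb
    · exact Or.inr hbc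
    · exact Or.inl (h _ _ hmb hbc)

theorem prime_graph_component_is_star_general
    {G : Type*} [Group G] [Finite G]
    (hco : IsCograph (powerGraph G))
    {a b m : ℕ} (hadj : (primeGraph G).Adj a b)
    (hreach : (primeGraph G).Reachable m a)
    (hmin : ∀ r : ℕ, r.Prime → (primeGraph G).Reachable m r → m ≤ r) :
    a = m ∨ b = m := by
  have hstar : ∀ s v, (primeGraph G).Adj m s → (primeGraph G).Adj s v → v = m :=
    fun s v hms hsv => hco.eq_of_primeGraph_adj hms hsv
      ((hmin s hms.2.2.1 hms.reachable).lt_of_ne hms.1)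
  rcases hreach.eq_or_adj_of_forall hstar with ham | hma
  · exact Or.inl ham
  · exact Or.inr (hstar a b hma hadj)

theorem prime_graph_component_is_star
    {G : Type*} [Group G] [Finite G]
    (hco : IsCograph (powerGraph G))
    {a b m : ℕ} (hadj : (primeGraph G).Adj a b)
    (hm : m.Prime) (hmG : m ∣ Nat.card G)
    (hreach : (primeGraph G).Reachable m a)
    (hmin : ∀ r : ℕ, r.Prime → (primeGraph G).Reachable m r → m ≤ r) :
    a = m ∨ b = m :=
  prime_graph_component_is_star_general hco hadj hreach hmin
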